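/- arXiv:1201.3991 — 3 statements merged into one kernel-verified Lean document; each statement's English description precedes it below -/
import Mathlib

section
/- Let m = q_1^{α_1} ··· q_z^{α_z} where q_1, ..., q_z are distinct primes and α_1, ..., α_z are positive integers, and let b be an integer. Then the number of distinct residues modulo m of the form b^u with u ≥ 0 is at most λ(m) + max_{1 ≤ j ≤ z} α_j, where λ is the Carmichael function. -/
/-- The Carmichael function: the least positive integer `e` such that
`b ^ e ≡ 1 (mod m)` for all `b` coprime to `m`. -/
noncomputable def carmichael (m : ℕ) : ℕ :=
  sInf {e : ℕ | 0 < e ∧ ∀ b : ℕ, Nat.Coprime b m → b ^ e ≡ 1 [MOD m]}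

theorem stmt_0 (z : ℕ) (hz : 0 < z) (q α : Fin z → ℕ)
    (hq : ∀ j, (q j).Prime) (hinj : Function.Injective q) (hα : ∀ j, 0 < α j)
    (m : ℕ) (hm : m = ∏ j, q j ^ α j) (b : ℤ) :
    {x : ZMod m | ∃ u : ℕ, x = (b : ZMod m) ^ u}.ncard ≤
      carmichael m + Finset.univ.sup α := by
  classical
  set L := carmichael m with hLdef
  set A := Finset.univ.sup α with hAdef
  have hmpos : 0 < m := by
    rw [hm]; exact Finset.prod_pos fun j _ => pow_pos (hq j).pos _
  have hmem : L ∈ {e : ℕ | 0 < e ∧ ∀ c : ℕ, Nat.Coprime c m → c ^ e ≡ 1 [MOD m]} := by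
    apply Nat.sInf_mem
    exact ⟨m.totient, Nat.totient_pos.mpr hmpos, fun c hc => Nat.ModEq.pow_totient hc⟩
  obtain ⟨hLpos, hL⟩ := hmem
  -- the natural number representative of b mod m
  set n : ℕ := (b % (m : ℤ)).toNat with hn
  have hbn : b ≡ (n : ℤ) [ZMOD (m : ℤ)] := by
    have hnonneg : (0 : ℤ) ≤ b % (m : ℤ) :=
      Int.emod_nonneg b (by exact_mod_cast hmpos.ne')
    have : ((n : ℤ)) = b % (m : ℤ) := Int.toNat_of_nonneg hnonneg
    rw [this]
    exact (Int.emod_emod_of_dvd b dvd_rfl).symm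
  have key : ∀ u : ℕ, A ≤ u → (m : ℤ) ∣ b ^ (u + L) - b ^ u := by
    intro u hu
    have hAj : ∀ j, α j ≤ u := fun j =>
      le_trans (Finset.le_sup (Finset.mem_univ j)) hu
    have hmcast : (m : ℤ) = ∏ j, (q j : ℤ) ^ α j := by rw [hm]; push_cast; ring
    rw [hmcast]
    apply Finset.prod_dvd_of_coprime
    · intro i _ j _ hij
      have hcop : Nat.Coprime (q i ^ α i) (q j ^ α j) :=
        ((Nat.coprime_primes (hq i) (hq j)).mpr (fun h => hij (hinj h))).pow _ _
      have := (Nat.isCoprime_iff_coprime).mpr hcop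
      simpa using this
    · intro j _
      set p := q j with hp
      set e := α j with he
      have hpe_dvd_m : p ^ e ∣ m := by
        rw [hm]; exact Finset.dvd_prod_of_mem _ (Finset.mem_univ j)
      have hbnp : b ≡ (n : ℤ) [ZMOD ((p : ℤ) ^ e)] := by
        have : ((p : ℤ) ^ e) ∣ (m : ℤ) := by exact_mod_cast hpe_dvd_m
        exact hbn.of_dvd this
      by_cases hpn : p ∣ n
      · -- both powers are divisible by p^e
        have hdvd : ∀ v : ℕ, e ≤ v → (p : ℤ) ^ e ∣ b ^ v := by
          intro v hv
          have h1 : (p : ℤ) ^ e ∣ (n : ℤ) ^ v := by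
            calc (p : ℤ) ^ e ∣ (p : ℤ) ^ v := pow_dvd_pow _ hv
            _ ∣ (n : ℤ) ^ v := pow_dvd_pow_of_dvd (by exact_mod_cast hpn) v
          have h2 : b ^ v ≡ (n : ℤ) ^ v [ZMOD ((p : ℤ) ^ e)] := hbnp.pow v
          have h3 : (n : ℤ) ^ v ≡ 0 [ZMOD ((p : ℤ) ^ e)] :=
            (Int.modEq_zero_iff_dvd).mpr h1
          exact (Int.modEq_zero_iff_dvd).mp (h2.trans h3)
        exact dvd_sub (hdvd _ (le_trans (hAj j) (Nat.le_add_right u L)))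
          (hdvd _ (hAj j))
      · -- n is coprime to p
        have hcop_np : Nat.Coprime n (p ^ e) :=
          (((hq j).coprime_iff_not_dvd).mpr hpn).symm.pow_right e
        set M := ∏ i ∈ Finset.univ.erase j, q i ^ α i with hM
        have hmPM : m = p ^ e * M := by
          rw [hm]
          exact (Finset.mul_prod_erase Finset.univ (fun i => q i ^ α i)
            (Finset.mem_univ j)).symm
        have hcopPM : Nat.Coprime (p ^ e) M := by
          apply Nat.Coprime.prod_right
          intro i hi
          have hij : i ≠ j := (Finset.mem_erase.mp hi).1
          exact ((Nat.coprime_primes (hq j) (hq i)).mpr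
            (fun h => hij (hinj h.symm))).pow _ _
        obtain ⟨c, hc1, hc2⟩ := Nat.chineseRemainder hcopPM n 1
        have hccop : Nat.Coprime c m := by
          rw [hmPM]
          apply Nat.Coprime.mul_right
          · have hc1' : c % (p ^ e) = n % (p ^ e) := hc1
            have hgcd : Nat.gcd c (p ^ e) = Nat.gcd n (p ^ e) := by
              conv_lhs => rw [Nat.gcd_comm, Nat.gcd_rec, hc1', ← Nat.gcd_rec,
                Nat.gcd_comm]
            show Nat.gcd c (p ^ e) = 1
            rw [hgcd]; exact hcop_np
          · have hc2' : c % M = 1 % M := hc2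
            have hgcd : Nat.gcd c M = Nat.gcd 1 M := by
              conv_lhs => rw [Nat.gcd_comm, Nat.gcd_rec, hc2', ← Nat.gcd_rec,
                Nat.gcd_comm]
            show Nat.gcd c M = 1
            rw [hgcd, Nat.gcd_one_left]
        have hcL : c ^ L ≡ 1 [MOD m] := hL c hccop
        have hcLp : c ^ L ≡ 1 [MOD p ^ e] :=
          Nat.ModEq.of_dvd (hmPM ▸ dvd_mul_right _ _) hcL
        have hnL : n ^ L ≡ 1 [MOD p ^ e] := ((hc1.symm.pow L).trans hcLp)
        have hnLZ : (n : ℤ) ^ L ≡ 1 [ZMOD ((p : ℤ) ^ e)] := by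
          have := Int.natCast_modEq_iff.mpr hnL
          push_cast at this ⊢
          exact_mod_cast (Int.natCast_pow n L) ▸ this
        have hbL : b ^ L ≡ 1 [ZMOD ((p : ℤ) ^ e)] := (hbnp.pow L).trans hnLZ
        have hdvd1 : (p : ℤ) ^ e ∣ b ^ L - 1 := Int.ModEq.dvd hbL.symm
        have : b ^ (u + L) - b ^ u = b ^ u * (b ^ L - 1) := by ring
        rw [this]
        exact dvd_mul_of_dvd_right hdvd1 _
  have hrepeat : ∀ u : ℕ, ∃ v, v < L + A ∧ (b : ZMod m) ^ u = (b : ZMod m) ^ v := by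
    intro u
    induction u using Nat.strong_induction_on with
    | _ u ih =>
      by_cases h : u < L + A
      · exact ⟨u, h, rfl⟩
      · push_neg at h
        have hA : A ≤ u - L := by omega
        have hkey := key (u - L) hA
        have heq : (b : ZMod m) ^ u = (b : ZMod m) ^ (u - L) := by
          have hu' : (u - L) + L = u := by omega
          have hmod : ((b ^ ((u - L) + L) : ℤ) : ZMod m) = ((b ^ (u - L) : ℤ) : ZMod m) := by
            rw [ZMod.intCast_eq_intCast_iff]
            exact (Int.ModEq.symm (Int.modEq_iff_dvd.mpr hkey))
          rw [hu'] at hmod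
          push_cast at hmod
          exact hmod
        obtain ⟨v, hv, hveq⟩ := ih (u - L) (by omega)
        exact ⟨v, hv, heq.trans hveq⟩
  have hsub : {x : ZMod m | ∃ u : ℕ, x = (b : ZMod m) ^ u} ⊆
      ↑((Finset.range (L + A)).image fun v => (b : ZMod m) ^ v) := by
    rintro x ⟨u, rfl⟩
    obtain ⟨v, hv, hveq⟩ := hrepeat u
    simp only [Finset.coe_image, Set.mem_image, Finset.mem_coe, Finset.mem_range]
    exact ⟨v, hv, hveq.symm⟩
  calc {x : ZMod m | ∃ u : ℕ, x = (b : ZMod m) ^ u}.ncard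
      ≤ ((Finset.range (L + A)).image fun v => (b : ZMod m) ^ v).card := by
        rw [← Set.ncard_coe_finset]
        exact Set.ncard_le_ncard hsub (Finset.finite_toSet _)
    _ ≤ (Finset.range (L + A)).card := Finset.card_image_le
    _ = L + A := Finset.card_range _
    _ = carmichael m + A := by rw [hLdef]
end

section
/- Let P = {p_1, ..., p_t} be a finite set of primes with t ≥ 2, A the set of positive integers with all prime factors in P, and F(k) the smallest positive integer not representable as a sum of at most k elements of A. Then for every ε > 0 there is a constant C depending only on ε such that F(k) ≤ C·(kt)^{(1+ε)kt} for all k > 1. -/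
/-- `a` is a positive integer all of whose prime factors lie in `P`. -/
def InA (P : Finset ℕ) (a : ℕ) : Prop :=
  0 < a ∧ ∀ p : ℕ, p.Prime → p ∣ a → p ∈ P

/-- `n` is a sum of at most `k` elements of the set `A` attached to `P`. -/
def RepA (P : Finset ℕ) (k n : ℕ) : Prop :=
  ∃ L : List ℕ, L.length ≤ k ∧ (∀ a ∈ L, InA P a) ∧ L.sum = n

/-- `F(k)`: the smallest positive integer not representable as a sum of at
most `k` elements of `A`. -/
noncomputable def Fk (P : Finset ℕ) (k : ℕ) : ℕ :=
  sInf {n : ℕ | 0 < n ∧ ¬ RepA P k n}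

/-!
Every element of `A` up to `N` is determined by its `t` exponents, each at most `log₂ N`, so `A`
has at most `(log₂ N + 1)^t` elements up to `N`, and at most `((log₂ N + 1)^t + 1)^k` integers in
`[1, N]` are sums of at most `k` of them. With `m = k t` and `N = 2^(m D)` this count is below `N`
as soon as `2 (m D + 1) < 2^D`, which holds for `D = ⌊(1 + ε) log₂ m⌋` once `m` is large; then
`F(k) ≤ 2^(m D) ≤ m^((1 + ε) m)`, and the finitely many small `k` are absorbed into `C`.
-/

open Finset Filter Real
open scoped Pointwise

lemma Nat.factorization_le_log_two {a : ℕ} (ha : a ≠ 0) (p : ℕ) :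
    a.factorization p ≤ Nat.log 2 a := by
  by_cases hp : p.Prime
  · rw [Nat.le_log_iff_pow_le one_lt_two ha]
    exact (Nat.pow_le_pow_left hp.two_le _).trans (Nat.ordProj_le p ha)
  · simp [Nat.factorization_eq_zero_of_not_prime a hp]

lemma InA.factorization_eq_zero {P : Finset ℕ} {a p : ℕ} (ha : InA P a) (hp : p ∉ P) :
    a.factorization p = 0 := by
  by_cases hprime : p.Prime
  · exact Nat.factorization_eq_zero_of_not_dvd fun hdvd => hp (ha.2 p hprime hdvd)
  · exact Nat.factorization_eq_zero_of_not_prime a hprime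

section Counting

open scoped Classical

variable (P : Finset ℕ)

lemma card_filter_InA_le (N : ℕ) :
    #{a ∈ Icc 1 N | InA P a} ≤ (Nat.log 2 N + 1) ^ P.card := by
  have hmaps : ∀ a ∈ {a ∈ Icc 1 N | InA P a}, (fun p : P => a.factorization p) ∈
      Fintype.piFinset fun _ : P => range (Nat.log 2 N + 1) := by
    intro a ha
    simp only [mem_filter, mem_Icc] at ha
    simp only [Fintype.mem_piFinset, mem_range, Nat.lt_succ_iff]
    exact fun p => (Nat.factorization_le_log_two (by omega) p).trans (Nat.log_mono_right ha.1.2)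
  have hinj : Set.InjOn (fun a : ℕ => fun p : P => a.factorization p)
      ({a ∈ Icc 1 N | InA P a} : Finset ℕ) := by
    intro a ha b hb hab
    simp only [coe_filter, mem_Icc, Set.mem_ofPred_eq] at ha hb
    refine Nat.factorization_inj ha.2.1.ne' hb.2.1.ne' (Finsupp.ext fun p => ?_)
    by_cases hp : p ∈ P
    · exact congrFun hab ⟨p, hp⟩
    · rw [ha.2.factorization_eq_zero hp, hb.2.factorization_eq_zero hp]
  simpa using card_le_card_of_injOn _ hmaps hinj

lemma sum_mem_nsmul_of_InA {N : ℕ} {L : List ℕ} (hL : ∀ a ∈ L, InA P a) (hsum : L.sum ≤ N) :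
    ∀ {k : ℕ}, L.length ≤ k → L.sum ∈ k • insert 0 {a ∈ Icc 1 N | InA P a} := by
  induction L with
  | nil => exact fun _ => zero_mem_nsmul (mem_insert_self _ _)
  | cons a L ih =>
    intro k hk
    obtain ⟨k, rfl⟩ := Nat.exists_eq_add_of_le' (Nat.succ_le_of_lt (Nat.zero_lt_of_lt hk))
    rw [List.forall_mem_cons] at hL
    simp only [List.sum_cons, List.length_cons] at hsum hk ⊢
    rw [succ_nsmul, add_comm a]
    refine add_mem_add (ih hL.2 (by omega) (by omega)) (mem_insert_of_mem ?_)
    simp only [mem_filter, mem_Icc]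
    exact ⟨⟨hL.1.1, by omega⟩, hL.1⟩

lemma card_filter_RepA_le (k N : ℕ) :
    #{n ∈ Icc 1 N | RepA P k n} ≤ ((Nat.log 2 N + 1) ^ P.card + 1) ^ k := by
  have hsub : {n ∈ Icc 1 N | RepA P k n} ⊆ k • insert 0 {a ∈ Icc 1 N | InA P a} := by
    intro n hn
    simp only [mem_filter, mem_Icc] at hn
    obtain ⟨⟨-, hnN⟩, L, hlen, hL, rfl⟩ := hn
    exact sum_mem_nsmul_of_InA P hL hnN hlen
  calc #{n ∈ Icc 1 N | RepA P k n} ≤ #(insert 0 {a ∈ Icc 1 N | InA P a}) ^ k :=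
        (card_le_card hsub).trans card_nsmul_le
    _ ≤ ((Nat.log 2 N + 1) ^ P.card + 1) ^ k := by
        gcongr
        exact (card_insert_le _ _).trans (by gcongr; exact card_filter_InA_le P N)

lemma Fk_le_of_card_lt {k N : ℕ} (h : #{n ∈ Icc 1 N | RepA P k n} < N) : Fk P k ≤ N := by
  obtain ⟨n, hn, hrep⟩ := exists_mem_notMem_of_card_lt_card (h.trans_eq (Nat.card_Icc 1 N).symm)
  rw [mem_filter, not_and] at hrep
  have hn' := mem_Icc.1 hn
  exact (Nat.sInf_le (show n ∈ {n | 0 < n ∧ ¬RepA P k n} from ⟨hn'.1, hrep hn⟩)).trans hn'.2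

lemma Fk_le_two_pow {k D : ℕ} (hk : 0 < k) (ht : 0 < P.card)
    (hD : 2 * (k * P.card * D + 1) < 2 ^ D) : Fk P k ≤ 2 ^ (k * P.card * D) := by
  set x := k * P.card * D + 1
  refine Fk_le_of_card_lt P ((card_filter_RepA_le P k _).trans_lt ?_)
  rw [Nat.log_pow one_lt_two]
  have hx : 1 ≤ x ^ P.card := Nat.one_le_pow _ _ (by omega)
  calc (x ^ P.card + 1) ^ k ≤ ((2 * x) ^ P.card) ^ k := by
        gcongr
        calc x ^ P.card + 1 ≤ 2 ^ 1 * x ^ P.card := by omega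
          _ ≤ 2 ^ P.card * x ^ P.card := by gcongr <;> omega
          _ = (2 * x) ^ P.card := (mul_pow 2 x _).symm
    _ < ((2 ^ D) ^ P.card) ^ k := by gcongr
    _ = 2 ^ (k * P.card * D) := by rw [← pow_mul, ← pow_mul]; ring_nf

end Counting

lemma eventually_logb_le_rpow {ε : ℝ} (hε : 0 < ε) :
    ∀ᶠ x : ℝ in atTop, 4 * ((1 + ε) * logb 2 x + 1) ≤ x ^ ε := by
  have hlog := (isLittleO_log_rpow_atTop hε).const_mul_left (4 * (1 + ε) / log 2)
  have hconst : (fun _ => (4 : ℝ)) =o[atTop] fun x => x ^ ε :=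
    Asymptotics.isLittleO_const_left.2 <| .inr <|
      tendsto_norm_atTop_atTop.comp (tendsto_rpow_atTop hε)
  have ho : (fun x => 4 * ((1 + ε) * logb 2 x + 1)) =o[atTop] fun x => x ^ ε :=
    (hlog.add hconst).congr_left fun x => by simp only [logb]; ring
  filter_upwards [ho.eventuallyLE, eventually_ge_atTop 0] with x hx hx0
  rw [norm_of_nonneg (rpow_nonneg hx0 ε), norm_eq_abs, abs_le] at hx
  exact hx.2

lemma eventually_exists_two_pow_le_rpow {ε : ℝ} (hε : 0 < ε) :
    ∀ᶠ m : ℕ in atTop, ∃ D : ℕ, 2 * (m * D + 1) < 2 ^ D ∧ (2 : ℝ) ^ D ≤ (m : ℝ) ^ (1 + ε) := by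
  filter_upwards [tendsto_natCast_atTop_atTop.eventually (eventually_logb_le_rpow hε),
    eventually_ge_atTop 1] with m hm hm1
  have hx : (1 : ℝ) ≤ m := by exact_mod_cast hm1
  set y := (1 + ε) * logb 2 m
  have hy : 0 ≤ y := mul_nonneg (by linarith) (logb_nonneg one_lt_two hx)
  have h2y : (2 : ℝ) ^ y = (m : ℝ) ^ (1 + ε) := by
    rw [show y = logb 2 m * (1 + ε) from mul_comm _ _, rpow_mul zero_le_two,
      rpow_logb zero_lt_two (by norm_num) (by linarith)]
  refine ⟨⌊y⌋₊, ?_, ?_⟩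
  · have hD : (⌊y⌋₊ : ℝ) ≤ y := Nat.floor_le hy
    have hlt : (m : ℝ) ^ (1 + ε) < 2 * 2 ^ ⌊y⌋₊ := by
      rw [← h2y, ← pow_succ', ← rpow_natCast]
      push_cast
      exact rpow_lt_rpow_of_exponent_lt one_lt_two (Nat.lt_floor_add_one y)
    rw [rpow_add (by linarith), rpow_one] at hlt
    have hmε : 0 ≤ (m : ℝ) ^ ε := rpow_nonneg (by linarith) ε
    suffices (2 * (m * ⌊y⌋₊ + 1) : ℝ) < 2 ^ ⌊y⌋₊ by exact_mod_cast this
    calc (2 * (m * ⌊y⌋₊ + 1) : ℝ) ≤ 2 * m * (y + 1) := by nlinarith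
      _ ≤ m * (4 * (y + 1)) / 2 := by linarith
      _ ≤ m * m ^ ε / 2 := by gcongr
      _ < 2 ^ ⌊y⌋₊ := by linarith
  · rw [← h2y, ← rpow_natCast]
    exact rpow_le_rpow_of_exponent_le one_le_two (Nat.floor_le hy)

lemma natCast_two_pow_mul_le_rpow {m D : ℕ} {a : ℝ} (h : (2 : ℝ) ^ D ≤ (m : ℝ) ^ a) :
    ((2 ^ (m * D) : ℕ) : ℝ) ≤ (m : ℝ) ^ (a * m) := by
  rw [rpow_mul_natCast m.cast_nonneg, Nat.cast_pow, Nat.cast_two, mul_comm, pow_mul]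
  gcongr

lemma eventually_Fk_le (P : Finset ℕ) (ht : 0 < P.card) {ε : ℝ} (hε : 0 < ε) :
    ∀ᶠ k in atTop, (Fk P k : ℝ) ≤ ((k * P.card : ℕ) : ℝ) ^ ((1 + ε) * (k * P.card : ℕ)) := by
  have hm : Tendsto (· * P.card) atTop atTop :=
    tendsto_atTop_mono (fun k => Nat.le_mul_of_pos_right k ht) tendsto_id
  filter_upwards [hm.eventually (eventually_exists_two_pow_le_rpow hε), eventually_gt_atTop 0]
    with k ⟨D, hD, h2D⟩ hk
  exact (Nat.cast_le.2 (Fk_le_two_pow P hk ht hD)).trans (natCast_two_pow_mul_le_rpow h2D)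

lemma exists_pos_mul_bound_of_eventually {f : ℕ → ℕ} {g : ℕ → ℝ} (hg : ∀ n, 1 ≤ g n)
    (h : ∀ᶠ n in atTop, (f n : ℝ) ≤ g n) : ∃ C : ℝ, 0 < C ∧ ∀ n, (f n : ℝ) ≤ C * g n := by
  obtain ⟨N, hN⟩ := eventually_atTop.1 h
  refine ⟨(range N).sup f + 1, by positivity, fun n => ?_⟩
  have hC : (1 : ℝ) ≤ (range N).sup f + 1 := by simp
  rcases lt_or_ge n N with hn | hn
  · calc (f n : ℝ) ≤ (range N).sup f := by exact_mod_cast le_sup (mem_range.2 hn)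
      _ ≤ ((range N).sup f + 1) * 1 := by linarith
      _ ≤ _ := mul_le_mul_of_nonneg_left (hg n) (by positivity)
  · exact (hN n hn).trans (le_mul_of_one_le_left (zero_le_one.trans (hg n)) hC)

lemma one_le_natCast_rpow_mul_self {a : ℝ} (ha : 0 ≤ a) (n : ℕ) : 1 ≤ (n : ℝ) ^ (a * n) := by
  rcases n.eq_zero_or_pos with rfl | hn
  · simp
  · exact one_le_rpow (by exact_mod_cast hn) (by positivity)

theorem stmt_4_general (P : Finset ℕ) (ht : 2 ≤ P.card)
    (ε : ℝ) (hε : 0 < ε) :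
    ∃ C : ℝ, 0 < C ∧ ∀ k : ℕ, 1 < k →
      (Fk P k : ℝ) ≤ C * ((k * P.card : ℕ) : ℝ) ^ ((1 + ε) * (k * P.card : ℕ)) := by
  obtain ⟨C, hC, hbound⟩ := exists_pos_mul_bound_of_eventually
    (fun k => one_le_natCast_rpow_mul_self (by linarith) (k * P.card))
    (eventually_Fk_le P (by omega) hε)
  exact ⟨C, hC, fun k _ => hbound k⟩

theorem stmt_4 (P : Finset ℕ) (hP : ∀ p ∈ P, p.Prime) (ht : 2 ≤ P.card)
    (ε : ℝ) (hε : 0 < ε) :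
    ∃ C : ℝ, 0 < C ∧ ∀ k : ℕ, 1 < k →
      (Fk P k : ℝ) ≤ C * ((k * P.card : ℕ) : ℝ) ^ ((1 + ε) * (k * P.card : ℕ)) :=
  stmt_4_general P ht ε hε
end

section
/- Let p < q be two primes, and let A be the set of positive integers of the form p^a q^b. Suppose there is a constant c_1 > 0 such that for every integer n ≥ 2, the largest element a ∈ A with a ≤ n satisfies n − a < n/(log n)^{c_1} whenever n ≥ 16. Then there is a constant c > 0 depending only on p, q, c_1 such that every integer n ≥ 2 can be written as a sum of at most 2(log n)/(c_1 log log n) + (log n)^{1/2}/log c_2 + O(1) elements of A, where c_2 > 1 depends only on p. -/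
/-- The set of positive integers of the form `p^a * q^b`. -/
def InApq (p q n : ℕ) : Prop := ∃ a b : ℕ, n = p ^ a * q ^ b

/-!
Run the greedy algorithm. As long as the remainder `m` satisfies `log m > √(log n)`, the
hypothesis on the largest element of `A` below `m` divides the remainder by at least
`(log m)^c₁ ≥ (log n)^(c₁/2)`, so this phase takes at most `2 log n / (c₁ log log n)` steps.
Below that threshold subtracting the largest power `p^k ≤ m` already divides the remainder
by `c₂ = p/(p-1)`, because `m < p^(k+1)`; this phase takes `√(log n) / log c₂ + O(1)` steps.
-/

open Real

theorem inApq_pow (p q k : ℕ) : InApq p q (p ^ k) := ⟨k, 0, by simp⟩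

def IsSumOfAtMost (S : ℕ → Prop) (m : ℕ) (b : ℝ) : Prop :=
  ∃ L : List ℕ, (∀ x ∈ L, S x) ∧ L.sum = m ∧ (L.length : ℝ) ≤ b

namespace IsSumOfAtMost

variable {S S' : ℕ → Prop} {m : ℕ} {b b' : ℝ}

theorem zero (hb : 0 ≤ b) : IsSumOfAtMost S 0 b :=
  ⟨[], by simp, rfl, by simpa using hb⟩

theorem add {s : ℕ} (hs : S s) (h : IsSumOfAtMost S m b) : IsSumOfAtMost S (s + m) (b + 1) := by
  obtain ⟨L, hL, rfl, hlen⟩ := h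
  refine ⟨s :: L, ?_, by simp, by push_cast [List.length_cons]; linarith⟩
  simpa [hs] using hL

theorem mono (hS : ∀ x, S x → S' x) (hb : b ≤ b') (h : IsSumOfAtMost S m b) :
    IsSumOfAtMost S' m b' := by
  obtain ⟨L, hL, hsum, hlen⟩ := h
  exact ⟨L, fun x hx => hS x (hL x hx), hsum, hlen.trans hb⟩

end IsSumOfAtMost

section GreedyDescent

variable {S : ℕ → Prop} {K T B : ℝ}

theorem max_zero_div_log_add_one_le (hK : 1 < K) (hT : 0 ≤ T) {r m : ℕ} (hr : T < log r)
    (hrm : (r : ℝ) * K ≤ m) :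
    max 0 ((log r - T) / log K) + 1 ≤ max 0 ((log m - T) / log K) := by
  have hr0 : (0 : ℝ) < r := Nat.cast_pos.mpr <| Nat.pos_of_ne_zero <| by
    rintro rfl; rw [Nat.cast_zero, log_zero] at hr; linarith
  have hlogK : 0 < log K := log_pos hK
  have hlog : log r + log K ≤ log m := by
    rw [← log_mul hr0.ne' (by linarith)]
    exact log_le_log (by positivity) hrm
  rw [max_eq_right (div_nonneg (by linarith) hlogK.le)]
  refine le_max_of_le_right ?_
  rw [div_add_one hlogK.ne', div_le_div_iff_of_pos_right hlogK]
  linarith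

theorem isSumOfAtMost_of_greedy_step (hK : 1 < K) (hT : 0 ≤ T)
    (hsmall : ∀ m : ℕ, log m ≤ T → IsSumOfAtMost S m B)
    (hstep : ∀ m : ℕ, T < log m → ∃ s, S s ∧ s ≤ m ∧ ((m - s : ℕ) : ℝ) * K ≤ m)
    (m : ℕ) :
    IsSumOfAtMost S m (max 0 ((log m - T) / log K) + B + 1) := by
  induction m using Nat.strong_induction_on with
  | _ m ih =>
  by_cases hm : log m ≤ T
  · exact (hsmall m hm).mono (fun _ => id) (by linarith [le_max_left 0 ((log m - T) / log K)])
  obtain ⟨s, hs, hsm, hdiv⟩ := hstep m (not_le.mp hm)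
  have hm0 : m ≠ 0 := by rintro rfl; rw [Nat.cast_zero, log_zero] at hm; linarith
  have hrm : m - s < m := by
    by_contra! h
    have hr : m - s = m := by omega
    rw [hr] at hdiv
    have : (0 : ℝ) < m := by positivity
    nlinarith
  rw [← Nat.add_sub_cancel' hsm]
  by_cases hr : log (m - s : ℕ) ≤ T
  · refine ((hsmall _ hr).add hs).mono (fun _ => id) ?_
    rw [Nat.add_sub_cancel' hsm]
    linarith [le_max_left 0 ((log m - T) / log K)]
  · refine ((ih _ hrm).add hs).mono (fun _ => id) ?_
    rw [Nat.add_sub_cancel' hsm]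
    linarith [max_zero_div_log_add_one_le hK hT (not_le.mp hr) hdiv]

end GreedyDescent

theorem one_lt_div_sub_one {x : ℝ} (hx : 1 < x) : 1 < x / (x - 1) :=
  (one_lt_div (by linarith)).mpr (by linarith)

theorem natCast_sub_pow_log_mul_le {p : ℕ} (hp : 2 ≤ p) (m : ℕ) :
    ((m - p ^ Nat.log p m : ℕ) : ℝ) * (p / (p - 1)) ≤ m := by
  rcases Nat.eq_zero_or_pos m with rfl | hm
  · simp
  have hle : p ^ Nat.log p m ≤ m := Nat.pow_log_le_self p hm.ne'
  have hlt : (m : ℝ) < p ^ Nat.log p m * p := by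
    exact_mod_cast (pow_succ p (Nat.log p m)) ▸ Nat.lt_pow_succ_log_self hp m
  have hp1 : (0 : ℝ) < p - 1 := by
    have : (2 : ℝ) ≤ p := by exact_mod_cast hp
    linarith
  rw [Nat.cast_sub hle, mul_div_assoc', div_le_iff₀ hp1]
  push_cast
  nlinarith

theorem isSumOfAtMost_pow {p : ℕ} (hp : 2 ≤ p) (m : ℕ) :
    IsSumOfAtMost (fun x => ∃ k, x = p ^ k) m (log m / log (p / (p - 1)) + 2) := by
  have hK : (1 : ℝ) < p / (p - 1) := one_lt_div_sub_one (by exact_mod_cast hp)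
  refine (isSumOfAtMost_of_greedy_step (B := 1) hK le_rfl ?_ ?_ m).mono (fun _ => id) ?_
  · intro m hm
    rcases Nat.lt_or_ge m 2 with h | h
    · interval_cases m
      · exact IsSumOfAtMost.zero zero_le_one
      · simpa using (IsSumOfAtMost.zero le_rfl).add ⟨0, rfl⟩
    · have : (1 : ℝ) < m := by exact_mod_cast h
      linarith [log_pos this]
  · intro m hm
    have hm0 : m ≠ 0 := by rintro rfl; simp at hm
    exact ⟨_, ⟨_, rfl⟩, Nat.pow_log_le_self p hm0, natCast_sub_pow_log_mul_le hp m⟩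
  · rw [sub_zero, max_eq_right (div_nonneg (log_natCast_nonneg m) (log_pos hK).le)]
    linarith

theorem two_mul_log_two_div_nonpos {c : ℝ} (hc : 0 < c) : 2 * log 2 / (c * log (log 2)) ≤ 0 :=
  div_nonpos_of_nonneg_of_nonpos (by positivity) <| mul_nonpos_of_nonneg_of_nonpos hc.le
    (log_neg (log_pos one_lt_two) (by linarith [log_two_lt_d9])).le

theorem two_mul_log_two_div_le {c : ℝ} (hc : 0 < c) {n : ℕ} (hn : 2 ≤ n) :
    2 * log 2 / (c * log (log 2)) ≤ 2 * log n / (c * log (log n)) := by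
  rcases hn.eq_or_lt with rfl | hn
  · norm_num
  have hlogn : 1 ≤ log n := by
    rw [le_log_iff_exp_le (by positivity)]
    have : (3 : ℝ) ≤ n := by exact_mod_cast hn
    linarith [exp_one_lt_d9]
  have := log_nonneg hlogn
  exact (two_mul_log_two_div_nonpos hc).trans (by positivity)

theorem isSumOfAtMost_of_sixteen_le_log {p q : ℕ} (hp : p.Prime) {c₁ : ℝ} (hc₁ : 0 < c₁)
    (hgreedy : ∀ n : ℕ, 16 ≤ n → ∀ a : ℕ, InApq p q a → a ≤ n →
      (∀ a' : ℕ, InApq p q a' → a' ≤ n → a' ≤ a) →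
      ((n - a : ℕ) : ℝ) < (n : ℝ) / (Real.log n) ^ c₁)
    {n : ℕ} (hn : 16 ≤ log n) :
    IsSumOfAtMost (InApq p q) n
      (2 * log n / (c₁ * log (log n)) + log n ^ ((1 : ℝ) / 2) / log (p / (p - 1)) + 3) := by
  classical
  set T := log n ^ ((1 : ℝ) / 2) with hT
  have hT4 : 4 ≤ T := by
    rw [hT, ← sqrt_eq_rpow, show (4 : ℝ) = sqrt 16 by norm_num]
    exact sqrt_le_sqrt hn
  have hlogK : log (log n ^ (c₁ / 2)) = c₁ / 2 * log (log n) := log_rpow (by linarith) _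
  have hK : 1 < log n ^ (c₁ / 2) := one_lt_rpow (by linarith) (by positivity)
  have hc₂ : 0 < log (p / (p - 1) : ℝ) :=
    log_pos (one_lt_div_sub_one (by exact_mod_cast hp.one_lt))
  refine (isSumOfAtMost_of_greedy_step (T := T) (B := T / log (p / (p - 1)) + 2) hK
    (by linarith) ?_ ?_ n).mono (fun _ => id) ?_
  · intro m hm
    exact (isSumOfAtMost_pow hp.two_le m).mono (fun _ ⟨k, hk⟩ => hk ▸ inApq_pow p q k)
      (by gcongr)
  · intro m hm
    have hm_log : 0 < log m := by linarith
    have hm16 : 16 ≤ m := by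
      have hm0 : (0 : ℝ) < m :=
        Nat.cast_pos.mpr <| Nat.pos_of_ne_zero <| by rintro rfl; simp at hm_log
      have : log 16 < log m := by
        rw [show (16 : ℝ) = 2 ^ 4 by norm_num, log_pow]
        push_cast
        linarith [log_two_lt_d9]
      exact_mod_cast ((log_lt_log_iff (by norm_num) hm0).mp this).le
    set a := Nat.findGreatest (InApq p q) m
    have ha : InApq p q a := Nat.findGreatest_spec (by omega) (pow_zero p ▸ inApq_pow p q 0)
    have ham : a ≤ m := Nat.findGreatest_le m
    have hrem := hgreedy m hm16 a ha ham fun a' ha' ha'm => Nat.le_findGreatest ha'm ha'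
    have hKm : log n ^ (c₁ / 2) ≤ log m ^ c₁ := by
      rw [show c₁ / 2 = (1 / 2) * c₁ by ring, rpow_mul (by linarith)]
      exact rpow_le_rpow (by positivity) hm.le hc₁.le
    refine ⟨a, ha, ham, ?_⟩
    rw [lt_div_iff₀ (by positivity)] at hrem
    nlinarith [(Nat.cast_nonneg (m - a) : (0 : ℝ) ≤ _)]
  · have hll : 0 < log (log n) := log_pos (by linarith)
    have hmax :
        max 0 ((log n - T) / log (log n ^ (c₁ / 2))) ≤ 2 * log n / (c₁ * log (log n)) := by
      rw [hlogK, show 2 * log n / (c₁ * log (log n)) = log n / (c₁ / 2 * log (log n)) by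
        field_simp]
      exact max_le (by positivity) (by gcongr; linarith)
    linarith

theorem stmt_6_general (p q : ℕ) (hp : p.Prime)
    (c₁ : ℝ) (hc₁ : 0 < c₁)
    (hgreedy : ∀ n : ℕ, 16 ≤ n → ∀ a : ℕ, InApq p q a → a ≤ n →
      (∀ a' : ℕ, InApq p q a' → a' ≤ n → a' ≤ a) →
      ((n - a : ℕ) : ℝ) < (n : ℝ) / (Real.log n) ^ c₁) :
    ∃ c₂ : ℝ, 1 < c₂ ∧ ∃ C : ℝ, 0 ≤ C ∧ ∀ n : ℕ, 2 ≤ n →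
      ∃ L : List ℕ, (∀ a ∈ L, InApq p q a) ∧ L.sum = n ∧
        (L.length : ℝ) ≤ 2 * Real.log n / (c₁ * Real.log (Real.log n)) +
          (Real.log n) ^ ((1 : ℝ) / 2) / Real.log c₂ + C := by
  set c₂ : ℝ := p / (p - 1)
  have hc₂ : 1 < c₂ := one_lt_div_sub_one (by exact_mod_cast hp.one_lt)
  have hlogc₂ : 0 < log c₂ := log_pos hc₂
  have h16 : 0 ≤ 16 / log c₂ := div_nonneg (by norm_num) hlogc₂.le
  have hf₂ := two_mul_log_two_div_nonpos hc₁
  refine ⟨c₂, hc₂, 16 / log c₂ + 3 - 2 * log 2 / (c₁ * log (log 2)), by linarith,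
    fun n hn => ?_⟩
  by_cases hlog : 16 ≤ log n
  · exact (isSumOfAtMost_of_sixteen_le_log hp hc₁ hgreedy hlog).mono (fun _ => id) (by linarith)
  · refine (isSumOfAtMost_pow hp.two_le n).mono (fun _ ⟨k, hk⟩ => hk ▸ inApq_pow p q k) ?_
    have hlog_le : log n / log c₂ ≤ 16 / log c₂ := by gcongr; linarith
    have hT : 0 ≤ log n ^ ((1 : ℝ) / 2) / log c₂ :=
      div_nonneg (rpow_nonneg (log_natCast_nonneg n) _) hlogc₂.le
    linarith [two_mul_log_two_div_le hc₁ hn]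

theorem stmt_6 (p q : ℕ) (hp : p.Prime) (hq : q.Prime) (hpq : p < q)
    (c₁ : ℝ) (hc₁ : 0 < c₁)
    (hgreedy : ∀ n : ℕ, 16 ≤ n → ∀ a : ℕ, InApq p q a → a ≤ n →
      (∀ a' : ℕ, InApq p q a' → a' ≤ n → a' ≤ a) →
      ((n - a : ℕ) : ℝ) < (n : ℝ) / (Real.log n) ^ c₁) :
    ∃ c₂ : ℝ, 1 < c₂ ∧ ∃ C : ℝ, 0 ≤ C ∧ ∀ n : ℕ, 2 ≤ n →
      ∃ L : List ℕ, (∀ a ∈ L, InApq p q a) ∧ L.sum = n ∧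
        (L.length : ℝ) ≤ 2 * Real.log n / (c₁ * Real.log (Real.log n)) +
          (Real.log n) ^ ((1 : ℝ) / 2) / Real.log c₂ + C :=
  stmt_6_general p q hp c₁ hc₁ hgreedy
end
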